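/- Let T > 0 and q₀, v₀, q_T, v_T ∈ ℝ. Define λ_q0 := (sinh T · (q_T − q₀) + (1 − cosh T)(v₀ + v_T)) / (2(cosh T − 1) − T sinh T), λ_v0 := (cosh T · v₀ − v_T + (cosh T − 1) λ_q0) / sinh T, and v⋆(t) := cosh t · v₀ + (cosh t − 1) λ_q0 − sinh t · λ_v0. Then for all t ∈ [0, T], |v⋆(t)| ≤ (3/(2T)) (|v₀ + v_T| + |q_T − q₀|) + exp(−t) |v₀| + exp(−(T − t)) |v_T|. (Hyperbolic velocity turnpike bound with respect to (v̄, ū) = (0, 0) for the optimal velocity trajectory of the double integrator, Theorem 1.) -/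

import Mathlib

open Real

/-!
Eliminating `λ_v(0)` writes the optimal velocity as
`v⋆(t) = (sinh (T - t) v₀ + sinh t v_T - g(t) λ_q(0)) / sinh T` with
`g(t) = sinh T - sinh t - sinh (T - t) ≥ 0`.
The first two terms are boundary layers, since `sinh (T - t) ≤ e^{-t} sinh T` and
`sinh t ≤ e^{-(T - t)} sinh T`. The turnpike term is controlled by
`(T sinh T - 2 (cosh T - 1)) |λ_q(0)| ≤ sinh T (|v₀ + v_T| + |q_T - q₀|)` together with
`2 T g(t) ≤ 3 (T sinh T - 2 (cosh T - 1))`. As `g(t) ≤ sinh T - 2 sinh (T / 2)`, the half-angle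
formulas with `x = T / 2` reduce the latter to `3 sinh x ≤ x cosh x + 2 x`, which follows from
`sinh x ≤ x cosh x` by differentiating twice.
-/

lemma pos_of_hasDerivAt_pos {f f' : ℝ → ℝ} (hf : ∀ x, HasDerivAt f (f' x) x)
    (hf' : ∀ x, 0 < x → 0 < f' x) (h0 : f 0 = 0) {x : ℝ} (hx : 0 < x) : 0 < f x := by
  have hmono : StrictMonoOn f (Set.Ici 0) :=
    strictMonoOn_of_deriv_pos (convex_Ici 0)
      (fun y _ => (hf y).continuousAt.continuousWithinAt)
      (fun y hy => by rw [(hf y).deriv]; exact hf' y (by simpa using hy))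
  simpa [h0] using hmono Set.self_mem_Ici hx.le hx

namespace Real

theorem sinh_lt_mul_cosh {x : ℝ} (hx : 0 < x) : sinh x < x * cosh x := by
  have := pos_of_hasDerivAt_pos (f := fun y => y * cosh y - sinh y)
    (f' := fun y => y * sinh y)
    (fun y => (((hasDerivAt_id y).mul (hasDerivAt_cosh y)).sub (hasDerivAt_sinh y)).congr_deriv
      (by simp only [id]; ring))
    (fun y hy => mul_pos hy (sinh_pos_iff.2 hy)) (by simp) hx
  linarith

theorem two_mul_cosh_sub_one_lt_mul_sinh {x : ℝ} (hx : 0 < x) :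
    2 * (cosh x - 1) < x * sinh x := by
  have := pos_of_hasDerivAt_pos (f := fun y => y * sinh y - 2 * (cosh y - 1))
    (f' := fun y => y * cosh y - sinh y)
    (fun y => (((hasDerivAt_id y).mul (hasDerivAt_sinh y)).sub
      (((hasDerivAt_cosh y).sub_const 1).const_mul 2)).congr_deriv (by simp only [id]; ring))
    (fun y hy => sub_pos.2 (sinh_lt_mul_cosh hy)) (by simp) hx
  linarith

theorem three_mul_sinh_lt {x : ℝ} (hx : 0 < x) : 3 * sinh x < x * cosh x + 2 * x := by
  have := pos_of_hasDerivAt_pos (f := fun y => y * cosh y + 2 * y - 3 * sinh y)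
    (f' := fun y => y * sinh y - 2 * (cosh y - 1))
    (fun y => ((((hasDerivAt_id y).mul (hasDerivAt_cosh y)).add
      ((hasDerivAt_id y).const_mul 2)).sub ((hasDerivAt_sinh y).const_mul 3)).congr_deriv
        (by simp only [id]; ring))
    (fun y hy => sub_pos.2 (two_mul_cosh_sub_one_lt_mul_sinh hy)) (by simp) hx
  linarith

theorem cosh_sub_one_le_sinh {x : ℝ} (hx : 0 ≤ x) : cosh x - 1 ≤ sinh x := by
  have := cosh_sub_sinh x
  have : exp (-x) ≤ 1 := exp_le_one_iff.2 (by linarith)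
  linarith

theorem sinh_add_sinh_le_sinh_add {a b : ℝ} (ha : 0 ≤ a) (hb : 0 ≤ b) :
    sinh a + sinh b ≤ sinh (a + b) := by
  rw [sinh_add]
  nlinarith [one_le_cosh a, one_le_cosh b, sinh_nonneg_iff.2 ha, sinh_nonneg_iff.2 hb]

theorem two_mul_sinh_half_le_sinh_add_sinh_sub {T : ℝ} (hT : 0 ≤ T) (t : ℝ) :
    2 * sinh (T / 2) ≤ sinh t + sinh (T - t) := by
  have h1 := sinh_add (T / 2) (t - T / 2)
  have h2 := sinh_sub (T / 2) (t - T / 2)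
  rw [add_sub_cancel] at h1
  rw [show T / 2 - (t - T / 2) = T - t by ring] at h2
  nlinarith [one_le_cosh (t - T / 2), sinh_nonneg_iff.2 (by linarith : 0 ≤ T / 2)]

theorem exp_neg_mul_sinh (T t : ℝ) :
    exp (-t) * sinh T = sinh (T - t) + exp (-T) * sinh t := by
  simp only [sinh_eq, exp_neg, exp_sub]
  field_simp
  ring

theorem sinh_sub_le_exp_neg_mul_sinh (T : ℝ) {t : ℝ} (ht : 0 ≤ t) :
    sinh (T - t) ≤ exp (-t) * sinh T := by
  rw [exp_neg_mul_sinh]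
  have := mul_nonneg (exp_pos (-T)).le (sinh_nonneg_iff.2 ht)
  linarith

end Real

theorem two_mul_mul_sinh_sub_two_mul_sinh_half_le {T : ℝ} (hT : 0 ≤ T) :
    2 * T * (sinh T - 2 * sinh (T / 2)) ≤ 3 * (T * sinh T - 2 * (cosh T - 1)) := by
  obtain ⟨x, rfl⟩ : ∃ x, T = 2 * x := ⟨T / 2, by ring⟩
  rw [mul_div_cancel_left₀ x two_ne_zero, sinh_two_mul, cosh_two_mul, cosh_sq]
  rcases (by linarith : 0 ≤ x).eq_or_lt with rfl | hx
  · simp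
  -- the difference of the two sides is `4 sinh x (x cosh x + 2 x - 3 sinh x)`
  have key : 0 ≤ 4 * sinh x * (x * cosh x + 2 * x - 3 * sinh x) :=
    mul_nonneg (by positivity) (by linarith [three_mul_sinh_lt hx])
  linarith

theorem two_mul_mul_sinh_sub_sinh_sub_sinh_sub_le {T : ℝ} (hT : 0 ≤ T) (t : ℝ) :
    2 * T * (sinh T - sinh t - sinh (T - t)) ≤ 3 * (T * sinh T - 2 * (cosh T - 1)) := by
  have := two_mul_sinh_half_le_sinh_add_sinh_sub hT t
  nlinarith [two_mul_mul_sinh_sub_two_mul_sinh_half_le hT]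

theorem abs_mul_add_mul_sub_mul_le {a b c : ℝ} (ha : 0 ≤ a) (hb : 0 ≤ b) (hc : 0 ≤ c)
    (x y z : ℝ) : |a * x + b * y - c * z| ≤ a * |x| + b * |y| + c * |z| := by
  refine (abs_sub _ _).trans (add_le_add ((abs_add_le _ _).trans_eq ?_) ?_) <;>
    simp only [abs_mul, abs_of_nonneg ha, abs_of_nonneg hb, abs_of_nonneg hc, le_refl]

theorem velocity_eq_of_adjointV_eq (T t v₀ vT lamq lamv : ℝ) (hT : sinh T ≠ 0)
    (hlamv : lamv = (cosh T * v₀ - vT + (cosh T - 1) * lamq) / sinh T) :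
    cosh t * v₀ + (cosh t - 1) * lamq - sinh t * lamv =
      (sinh (T - t) * v₀ + sinh t * vT - (sinh T - sinh t - sinh (T - t)) * lamq) / sinh T := by
  rw [hlamv, sinh_sub]
  field_simp
  ring

theorem mul_abs_adjointQ_le {T : ℝ} (hT : 0 < T) (q₀ v₀ qT vT : ℝ) :
    (T * sinh T - 2 * (cosh T - 1)) *
        |(sinh T * (qT - q₀) + (1 - cosh T) * (v₀ + vT)) / (2 * (cosh T - 1) - T * sinh T)| ≤
      sinh T * (|v₀ + vT| + |qT - q₀|) := by
  have hA := two_mul_cosh_sub_one_lt_mul_sinh hT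
  have hs := sinh_pos_iff.2 hT
  have hc := cosh_sub_one_le_sinh hT.le
  rw [abs_div, abs_of_neg (by linarith : 2 * (cosh T - 1) - T * sinh T < 0), neg_sub,
    mul_div_cancel₀ _ (by linarith)]
  calc |sinh T * (qT - q₀) + (1 - cosh T) * (v₀ + vT)|
      ≤ sinh T * |qT - q₀| + (cosh T - 1) * |v₀ + vT| := by
        refine (abs_add_le _ _).trans_eq ?_
        rw [abs_mul, abs_mul, abs_of_pos hs, abs_of_nonpos (sub_nonpos.2 (one_le_cosh T))]
        ring
    _ ≤ sinh T * (|v₀ + vT| + |qT - q₀|) := by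
        nlinarith [abs_nonneg (v₀ + vT)]

/-- Theorem 1: hyperbolic velocity turnpike bound with respect to
`(v̄, ū) = (0, 0)` for the optimal velocity trajectory of the double integrator. -/
theorem double_integrator_hyperbolic_velocity_turnpike
    (T : ℝ) (hT : 0 < T) (q₀ v₀ qT vT : ℝ)
    (lamq0 lamv0 : ℝ)
    (hlamq0 : lamq0 =
      (sinh T * (qT - q₀) + (1 - cosh T) * (v₀ + vT)) /
        (2 * (cosh T - 1) - T * sinh T))
    (hlamv0 : lamv0 = (cosh T * v₀ - vT + (cosh T - 1) * lamq0) / sinh T)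
    (vstar : ℝ → ℝ)
    (hvstar : vstar = fun t =>
      cosh t * v₀ + (cosh t - 1) * lamq0 - sinh t * lamv0) :
    ∀ t ∈ Set.Icc (0 : ℝ) T,
      |vstar t| ≤ (3 / (2 * T)) * (|v₀ + vT| + |qT - q₀|) +
        exp (-t) * |v₀| + exp (-(T - t)) * |vT| := by
  intro t ⟨ht0, htT⟩
  have hs : 0 < sinh T := sinh_pos_iff.2 hT
  set B := |v₀ + vT| + |qT - q₀|
  set g := sinh T - sinh t - sinh (T - t)
  have hg : 0 ≤ g := by
    have := sinh_add_sinh_le_sinh_add ht0 (sub_nonneg.2 htT)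
    rw [add_sub_cancel] at this
    linarith
  have hgap : 2 * T * g ≤ 3 * (T * sinh T - 2 * (cosh T - 1)) :=
    two_mul_mul_sinh_sub_sinh_sub_sinh_sub_le hT.le t
  have hlam : (T * sinh T - 2 * (cosh T - 1)) * |lamq0| ≤ sinh T * B :=
    hlamq0 ▸ mul_abs_adjointQ_le hT q₀ v₀ qT vT
  have hturnpike : g * |lamq0| ≤ 3 / (2 * T) * B * sinh T := by
    rw [show 3 / (2 * T) * B * sinh T = 3 * (sinh T * B) / (2 * T) by ring,
      le_div_iff₀ (by positivity)]
    nlinarith [mul_le_mul_of_nonneg_right hgap (abs_nonneg lamq0)]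
  simp only [hvstar]
  rw [velocity_eq_of_adjointV_eq T t v₀ vT lamq0 lamv0 hs.ne' hlamv0, abs_div,
    abs_of_pos hs, div_le_iff₀ hs]
  calc |sinh (T - t) * v₀ + sinh t * vT - g * lamq0|
      ≤ sinh (T - t) * |v₀| + sinh t * |vT| + g * |lamq0| :=
        abs_mul_add_mul_sub_mul_le (sinh_nonneg_iff.2 (sub_nonneg.2 htT))
          (sinh_nonneg_iff.2 ht0) hg v₀ vT lamq0
    _ ≤ exp (-t) * sinh T * |v₀| + exp (-(T - t)) * sinh T * |vT| +
          3 / (2 * T) * B * sinh T := by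
        gcongr
        · exact sinh_sub_le_exp_neg_mul_sinh T ht0
        · simpa using sinh_sub_le_exp_neg_mul_sinh T (sub_nonneg.2 htT)
    _ = _ := by ring
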